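/- Let p > 2 be a prime and let b₁, b̄₁, b₂, b̄₂ be non-negative integers such that d₁ = b₁ + b̄₁ > 0 and d₂ = b₂ + b̄₂ > 0. Then ∑_{1 ≤ j < k ≤ p-1} ( q^{b₁ j + b₂ k} + (-1)^{d₁ + d₂} q^{b̄₁ j + b̄₂ k} ) / ([j]_q^{d₁} [k]_q^{d₂}) ≡ (∑_{j=1}^{p-1} q^{b₁ j}/[j]_q^{d₁}) · (∑_{k=1}^{p-1} q^{b₂ k}/[k]_q^{d₂}) − ∑_{k=1}^{p-1} q^{(b₁+b₂)k}/[k]_q^{d₁+d₂} (mod [p]_q). -/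

import Mathlib

open Polynomial Finset

noncomputable section

/-- The `q`-integer `[n]_q = 1 + q + ⋯ + q^(n-1)`, as a polynomial in `ℚ[q]`. -/
def qIntP (n : ℕ) : Polynomial ℚ := ∑ i ∈ Finset.range n, X ^ i

/-- The `q`-integer `[n]_q` viewed in the field of rational functions `ℚ(q)`. -/
def qN (n : ℕ) : RatFunc ℚ := algebraMap (Polynomial ℚ) (RatFunc ℚ) (qIntP n)

/-- The `q`-Pochhammer symbol `(q; q)_n = ∏_{j=1}^{n} (1 - q^j)` in `ℚ(q)`. -/
def qqPoch (n : ℕ) : RatFunc ℚ :=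
  algebraMap (Polynomial ℚ) (RatFunc ℚ) (∏ j ∈ Finset.range n, (1 - X ^ (j + 1)))

/-- The `q`-Pochhammer symbol `(-q; q)_n = ∏_{j=1}^{n} (1 + q^j)` in `ℚ(q)`. -/
def nqPoch (n : ℕ) : RatFunc ℚ :=
  algebraMap (Polynomial ℚ) (RatFunc ℚ) (∏ j ∈ Finset.range n, (1 + X ^ (j + 1)))

/-- The Gaussian `q`-binomial coefficient, as a rational function. -/
def qbin (n k : ℕ) : RatFunc ℚ :=
  if k ≤ n then qqPoch n / (qqPoch k * qqPoch (n - k)) else 0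

/-- `qCong p r x y` means `x ≡ y (mod [p]_q^r)`: the difference `x - y` can be
written as a fraction whose numerator (a polynomial) is divisible by `[p]_q^r`
and whose denominator is relatively prime to `[p]_q`. -/
def qCong (p r : ℕ) (x y : RatFunc ℚ) : Prop :=
  ∃ a b : Polynomial ℚ, IsCoprime b (qIntP p) ∧
    (x - y) * algebraMap (Polynomial ℚ) (RatFunc ℚ) b =
      algebraMap (Polynomial ℚ) (RatFunc ℚ) (qIntP p ^ r * a)

/-! Expanding the product, the right-hand side is `∑_{j<k} (f j g k + f k g j)` with
`f j = q^(b₁ j) / [j]_q^d₁` and `g k = q^(b₂ k) / [k]_q^d₂`. The reflection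
`(j, k) ↦ (p - k, p - j)` permutes the pairs `j < k`, and modulo the irreducible `[p]_q` one has
`q^(b (p - j)) / [p - j]_q^d ≡ (-1)^d q^(b̄ j) / [j]_q^d` whenever `d = b + b̄`, which turns
`∑_{j<k} f k g j` into the second half of the left-hand side. -/

local notation "φ" => algebraMap ℚ[X] (RatFunc ℚ)

lemma qIntP_add (m n : ℕ) : qIntP (m + n) = qIntP m + X ^ m * qIntP n := by
  simp only [qIntP, sum_range_add, mul_sum, pow_add]

lemma qIntP_mul_X_sub_one (n : ℕ) : qIntP n * (X - 1) = X ^ n - 1 := geom_sum_mul X n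

lemma qIntP_ne_zero {n : ℕ} (hn : 0 < n) : qIntP n ≠ 0 := by
  intro h
  have h1 : (qIntP n).eval 1 = n := by simp [qIntP, eval_finsetSum]
  rw [h, eval_zero] at h1
  exact (Nat.cast_ne_zero.mpr hn.ne') h1.symm

lemma natDegree_qIntP {n : ℕ} (hn : 0 < n) : (qIntP n).natDegree = n - 1 := by
  have h := congrArg natDegree (qIntP_mul_X_sub_one n)
  rw [← C_1, natDegree_mul (qIntP_ne_zero hn) (X_sub_C_ne_zero 1), natDegree_X_sub_C,
    natDegree_X_pow_sub_C] at h
  omega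

lemma irreducible_qIntP {p : ℕ} (hp : p.Prime) : Irreducible (qIntP p) := by
  have := Fact.mk hp
  rw [show qIntP p = cyclotomic p ℚ from (cyclotomic_prime ℚ p).symm]
  exact cyclotomic.irreducible_rat hp.pos

lemma isCoprime_qIntP_of_lt {p j : ℕ} (hp : p.Prime) (hj : 0 < j) (hjp : j < p) :
    IsCoprime (qIntP j) (qIntP p) := by
  refine ((irreducible_qIntP hp).coprime_iff_not_dvd.mpr fun hdvd => ?_).symm
  have := natDegree_le_of_dvd hdvd (qIntP_ne_zero hj)
  rw [natDegree_qIntP hp.pos, natDegree_qIntP hj] at this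
  omega

lemma isCoprime_X_pow_qIntP (m : ℕ) {n : ℕ} (hn : 0 < n) :
    IsCoprime ((X : ℚ[X]) ^ m) (qIntP n) := by
  refine IsCoprime.pow_left ⟨-qIntP (n - 1), 1, ?_⟩
  rw [← Nat.add_sub_cancel' hn, qIntP_add, Nat.add_sub_cancel_left]
  simp only [qIntP, sum_range_one, pow_zero, pow_one]
  ring

lemma qIntP_dvd_reflect (b bb : ℕ) {j m : ℕ} (hjm : 0 < j + m) :
    qIntP (j + m) ∣
      X ^ (b * m) * qIntP j ^ (b + bb) - (-1) ^ (b + bb) * X ^ (bb * j) * qIntP m ^ (b + bb) := by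
  set d := b + bb with hd
  have hP : qIntP (j + m) = qIntP j + X ^ j * qIntP m := qIntP_add j m
  have hXp : qIntP (j + m) ∣ X ^ (b * (j + m)) - 1 := by
    rw [mul_comm]
    exact (Dvd.intro _ (qIntP_mul_X_sub_one _)).trans (pow_one_sub_dvd_pow_mul_sub_one X _ b)
  have hpow : qIntP (j + m) ∣ qIntP j ^ d - (-(X ^ j * qIntP m)) ^ d := by
    simpa [hP] using sub_dvd_pow_sub_pow (qIntP j) (-(X ^ j * qIntP m)) d
  refine (isCoprime_X_pow_qIntP (d * j) hjm).symm.dvd_of_dvd_mul_left ?_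
  have key : X ^ (d * j) * (X ^ (b * m) * qIntP j ^ d - (-1) ^ d * X ^ (bb * j) * qIntP m ^ d) =
      X ^ (bb * j) * ((X ^ (b * (j + m)) - 1) * qIntP j ^ d +
        (qIntP j ^ d - (-(X ^ j * qIntP m)) ^ d)) := by
    rw [hd]; ring
  rw [key]
  exact ((hXp.mul_right _).add hpow).mul_left _

def IsIntegralAt (P : ℚ[X]) (z : RatFunc ℚ) : Prop :=
  ∃ c d : ℚ[X], IsCoprime d P ∧ z * φ d = φ c

namespace IsIntegralAt

variable {P : ℚ[X]}

lemma algebraMap (c : ℚ[X]) : IsIntegralAt P (φ c) := ⟨c, 1, isCoprime_one_left, by simp⟩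

lemma neg_one_pow (n : ℕ) : IsIntegralAt P ((-1) ^ n) := by
  simpa using algebraMap (P := P) ((-1) ^ n)

lemma div {c d : ℚ[X]} (hd0 : d ≠ 0) (hd : IsCoprime d P) : IsIntegralAt P (φ c / φ d) :=
  ⟨c, d, hd, div_mul_cancel₀ _ (RatFunc.algebraMap_ne_zero hd0)⟩

lemma mul {z w : RatFunc ℚ} (hz : IsIntegralAt P z) (hw : IsIntegralAt P w) :
    IsIntegralAt P (z * w) := by
  obtain ⟨c, d, hd, he⟩ := hz
  obtain ⟨c', d', hd', he'⟩ := hw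
  refine ⟨c * c', d * d', hd.mul_left hd', ?_⟩
  rw [map_mul, map_mul, ← he, ← he']
  ring

end IsIntegralAt

namespace qCong

variable {p r : ℕ} {x y z x' y' : RatFunc ℚ}

protected lemma refl (p r : ℕ) (x : RatFunc ℚ) : qCong p r x x :=
  ⟨0, 1, isCoprime_one_left, by simp⟩

protected lemma symm (h : qCong p r x y) : qCong p r y x := by
  obtain ⟨a, b, hb, he⟩ := h
  exact ⟨-a, b, hb, by rw [← neg_sub x y, neg_mul, he, mul_neg, map_neg]⟩

lemma add (h : qCong p r x y) (h' : qCong p r x' y') : qCong p r (x + x') (y + y') := by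
  obtain ⟨a, b, hb, he⟩ := h
  obtain ⟨a', b', hb', he'⟩ := h'
  refine ⟨a * b' + a' * b, b * b', hb.mul_left hb', ?_⟩
  calc (x + x' - (y + y')) * φ (b * b')
      = (x - y) * φ b * φ b' + (x' - y') * φ b' * φ b := by rw [map_mul]; ring
    _ = φ (qIntP p ^ r * (a * b' + a' * b)) := by rw [he, he']; simp only [map_mul, map_add]; ring

protected lemma trans (h : qCong p r x y) (h' : qCong p r y z) : qCong p r x z := by
  convert (h.add h').add (qCong.refl p r (-y)) using 1 <;> ring

lemma mul_right (h : qCong p r x y) (hz : IsIntegralAt (qIntP p) z) :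
    qCong p r (x * z) (y * z) := by
  obtain ⟨a, b, hb, he⟩ := h
  obtain ⟨c, d, hd, hc⟩ := hz
  refine ⟨a * c, b * d, hb.mul_left hd, ?_⟩
  calc (x * z - y * z) * φ (b * d) = (x - y) * φ b * (z * φ d) := by rw [map_mul]; ring
    _ = φ (qIntP p ^ r * (a * c)) := by rw [he, hc, ← map_mul, mul_assoc]

lemma mul_left (h : qCong p r x y) (hz : IsIntegralAt (qIntP p) z) :
    qCong p r (z * x) (z * y) := by
  simpa only [mul_comm z] using h.mul_right hz

lemma mul (h : qCong p r x y) (h' : qCong p r x' y') (hx' : IsIntegralAt (qIntP p) x')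
    (hy : IsIntegralAt (qIntP p) y) : qCong p r (x * x') (y * y') :=
  (h.mul_right hx').trans (h'.mul_left hy)

lemma sum {ι : Type*} (s : Finset ι) {f g : ι → RatFunc ℚ}
    (h : ∀ i ∈ s, qCong p r (f i) (g i)) :
    qCong p r (∑ i ∈ s, f i) (∑ i ∈ s, g i) := by
  classical
  induction s using Finset.induction with
  | empty => exact qCong.refl p r 0
  | insert i s hi ih =>
    rw [sum_insert hi, sum_insert hi]
    exact (h i (mem_insert_self i s)).add (ih fun j hj => h j (mem_insert_of_mem hj))

lemma div_div_of_dvd {u v w t : ℚ[X]} (hw0 : w ≠ 0) (ht0 : t ≠ 0) (hw : IsCoprime w (qIntP p))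
    (ht : IsCoprime t (qIntP p)) (hdvd : qIntP p ^ r ∣ u * t - v * w) :
    qCong p r (φ u / φ w) (φ v / φ t) := by
  obtain ⟨a, ha⟩ := hdvd
  refine ⟨a, w * t, hw.mul_left ht, ?_⟩
  have hw0' := RatFunc.algebraMap_ne_zero hw0
  have ht0' := RatFunc.algebraMap_ne_zero ht0
  rw [← ha, map_mul, map_sub, map_mul, map_mul]
  field_simp

end qCong

def qTerm (b d j : ℕ) : RatFunc ℚ := RatFunc.X ^ (b * j) / qN j ^ d

lemma qTerm_eq (b d j : ℕ) : qTerm b d j = φ (X ^ (b * j)) / φ (qIntP j ^ d) := by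
  rw [qTerm, qN, map_pow, map_pow, RatFunc.algebraMap_X]

lemma qTerm_mul_qTerm (b d b' d' j : ℕ) :
    qTerm b d j * qTerm b' d' j = qTerm (b + b') (d + d') j := by
  rw [qTerm, qTerm, qTerm, div_mul_div_comm, ← pow_add, ← pow_add, add_mul]

lemma isIntegralAt_qTerm {p j : ℕ} (hp : p.Prime) (hj : 0 < j) (hjp : j < p) (b d : ℕ) :
    IsIntegralAt (qIntP p) (qTerm b d j) := by
  rw [qTerm_eq]
  exact .div (pow_ne_zero _ (qIntP_ne_zero hj)) (isCoprime_qIntP_of_lt hp hj hjp).pow_left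

/-- Since `[p - j]_q = ([p]_q - [j]_q) / q^j ≡ -q^(-j) [j]_q` and `q^p ≡ 1`, reflecting
`j ↦ p - j` trades the exponent `b` for `bb` at the cost of the sign `(-1)^(b + bb)`. -/
lemma qCong_qTerm_reflect {p j : ℕ} (hp : p.Prime) (hj : 0 < j) (hjp : j < p) (b bb : ℕ) :
    qCong p 1 (qTerm b (b + bb) (p - j)) ((-1) ^ (b + bb) * qTerm bb (b + bb) j) := by
  have hpj : 0 < p - j := Nat.sub_pos_of_lt hjp
  rw [qTerm_eq, qTerm_eq, show (-1 : RatFunc ℚ) = φ (-1) by simp, ← map_pow, mul_div_assoc',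
    ← map_mul]
  refine qCong.div_div_of_dvd (pow_ne_zero _ (qIntP_ne_zero hpj))
    (pow_ne_zero _ (qIntP_ne_zero hj))
    (isCoprime_qIntP_of_lt hp hpj (Nat.sub_lt hp.pos hj)).pow_left
    (isCoprime_qIntP_of_lt hp hj hjp).pow_left ?_
  rw [pow_one]
  simpa only [Nat.add_sub_cancel' hjp.le] using
    qIntP_dvd_reflect b bb (j := j) (m := p - j) (by omega)

lemma sum_Icc_mul_sum_Icc_sub_sum {R : Type*} [CommRing R] (f g : ℕ → R) (n : ℕ) :
    (∑ j ∈ Icc 1 n, f j) * (∑ k ∈ Icc 1 n, g k) - ∑ k ∈ Icc 1 n, f k * g k =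
      ∑ k ∈ Icc 1 n, ∑ j ∈ Icc 1 (k - 1), (f j * g k + f k * g j) := by
  induction n with
  | zero => simp
  | succ n ih =>
    simp only [sum_Icc_succ_top (Nat.le_add_left 1 n)]
    rw [← ih, Nat.add_sub_cancel, sum_add_distrib, ← sum_mul, ← mul_sum]
    ring

lemma sum_Icc_sum_Icc_reflect {M : Type*} [AddCommMonoid M] (n : ℕ) (H : ℕ → ℕ → M) :
    ∑ k ∈ Icc 1 (n - 1), ∑ j ∈ Icc 1 (k - 1), H j k =
      ∑ k ∈ Icc 1 (n - 1), ∑ j ∈ Icc 1 (k - 1), H (n - k) (n - j) := by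
  rw [sum_sigma', sum_sigma']
  refine sum_nbij' (fun x => ⟨n - x.2, n - x.1⟩) (fun x => ⟨n - x.2, n - x.1⟩)
    ?_ ?_ ?_ ?_ ?_ <;> rintro ⟨k, j⟩ h <;>
    simp only [mem_sigma, mem_Icc, Sigma.mk.injEq, heq_eq_eq] at h ⊢
  any_goals omega
  rw [show n - (n - j) = j by omega, show n - (n - k) = k by omega]

theorem qHH_general (p : ℕ) (hp : p.Prime)
    (b₁ bb₁ b₂ bb₂ : ℕ) (d₁ d₂ : ℕ) (hd₁ : d₁ = b₁ + bb₁) (hd₂ : d₂ = b₂ + bb₂) :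
    qCong p 1
      (∑ k ∈ Finset.Icc 1 (p - 1), ∑ j ∈ Finset.Icc 1 (k - 1),
        ((RatFunc.X : RatFunc ℚ) ^ (b₁ * j + b₂ * k) +
            (-1 : RatFunc ℚ) ^ (d₁ + d₂) * RatFunc.X ^ (bb₁ * j + bb₂ * k)) /
          (qN j ^ d₁ * qN k ^ d₂))
      ((∑ j ∈ Finset.Icc 1 (p - 1), (RatFunc.X : RatFunc ℚ) ^ (b₁ * j) / qN j ^ d₁) *
          (∑ k ∈ Finset.Icc 1 (p - 1), (RatFunc.X : RatFunc ℚ) ^ (b₂ * k) / qN k ^ d₂)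
        - ∑ k ∈ Finset.Icc 1 (p - 1),
            (RatFunc.X : RatFunc ℚ) ^ ((b₁ + b₂) * k) / qN k ^ (d₁ + d₂)) := by
  have hsummand (j k : ℕ) :
      ((RatFunc.X : RatFunc ℚ) ^ (b₁ * j + b₂ * k) +
          (-1) ^ (d₁ + d₂) * RatFunc.X ^ (bb₁ * j + bb₂ * k)) /
        (qN j ^ d₁ * qN k ^ d₂) =
        qTerm b₁ d₁ j * qTerm b₂ d₂ k +
          (-1) ^ (d₁ + d₂) * (qTerm bb₁ d₁ j * qTerm bb₂ d₂ k) := by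
    simp only [qTerm, div_mul_div_comm, ← pow_add, add_div, mul_div_assoc]
  have hterm (b d j : ℕ) : (RatFunc.X : RatFunc ℚ) ^ (b * j) / qN j ^ d = qTerm b d j := rfl
  simp only [hsummand, hterm, ← qTerm_mul_qTerm b₁ d₁ b₂ d₂, sum_Icc_mul_sum_Icc_sub_sum,
    sum_add_distrib]
  refine (qCong.refl _ _ _).add ?_
  rw [sum_Icc_sum_Icc_reflect p fun j k => qTerm b₁ d₁ k * qTerm b₂ d₂ j]
  refine qCong.sum _ fun k hk => qCong.sum _ fun j hj => ?_
  rw [mem_Icc] at hk hj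
  subst hd₁ hd₂
  rw [pow_add, mul_mul_mul_comm]
  exact ((qCong_qTerm_reflect hp (by omega) (by omega) b₁ bb₁).mul
    (qCong_qTerm_reflect hp (by omega) (by omega) b₂ bb₂)
    (isIntegralAt_qTerm hp (by omega) (by omega) _ _)
    ((IsIntegralAt.neg_one_pow _).mul (isIntegralAt_qTerm hp (by omega) (by omega) _ _))).symm

/-- For a prime `p > 2` and non-negative integers `b₁, b̄₁, b₂, b̄₂` with
`d₁ = b₁ + b̄₁ > 0` and `d₂ = b₂ + b̄₂ > 0`:
`∑_{1≤j<k≤p-1} (q^{b₁j+b₂k} + (-1)^{d₁+d₂} q^{b̄₁j+b̄₂k})/([j]_q^{d₁}[k]_q^{d₂}) ≡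
  (∑_{j=1}^{p-1} q^{b₁j}/[j]_q^{d₁})(∑_{k=1}^{p-1} q^{b₂k}/[k]_q^{d₂})
    − ∑_{k=1}^{p-1} q^{(b₁+b₂)k}/[k]_q^{d₁+d₂} (mod [p]_q)`. -/
theorem qHH (p : ℕ) (hp : p.Prime) (hp2 : 2 < p)
    (b₁ bb₁ b₂ bb₂ : ℕ) (d₁ d₂ : ℕ) (hd₁ : d₁ = b₁ + bb₁) (hd₂ : d₂ = b₂ + bb₂)
    (h₁ : 0 < d₁) (h₂ : 0 < d₂) :
    qCong p 1
      (∑ k ∈ Finset.Icc 1 (p - 1), ∑ j ∈ Finset.Icc 1 (k - 1),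
        ((RatFunc.X : RatFunc ℚ) ^ (b₁ * j + b₂ * k) +
            (-1 : RatFunc ℚ) ^ (d₁ + d₂) * RatFunc.X ^ (bb₁ * j + bb₂ * k)) /
          (qN j ^ d₁ * qN k ^ d₂))
      ((∑ j ∈ Finset.Icc 1 (p - 1), (RatFunc.X : RatFunc ℚ) ^ (b₁ * j) / qN j ^ d₁) *
          (∑ k ∈ Finset.Icc 1 (p - 1), (RatFunc.X : RatFunc ℚ) ^ (b₂ * k) / qN k ^ d₂)
        - ∑ k ∈ Finset.Icc 1 (p - 1),
            (RatFunc.X : RatFunc ℚ) ^ ((b₁ + b₂) * k) / qN k ^ (d₁ + d₂)) :=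
  qHH_general p hp b₁ bb₁ b₂ bb₂ d₁ d₂ hd₁ hd₂
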